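/- arXiv:2508.05184 — 4 statements merged into one kernel-verified Lean document; each statement's English description precedes it below -/
import Mathlib

section
/- An integral domain R is a Prüfer domain if and only if for every prime ideal p of R, the localization R_p is a valuation domain. -/
/-- A Prüfer domain: every finitely generated nonzero ideal is invertible
as a fractional ideal. -/
def IsPruferDomain (R : Type*) [CommRing R] [IsDomain R] : Prop :=
  ∀ I : Ideal R, I.FG → I ≠ ⊥ →
    IsUnit (I : FractionalIdeal (nonZeroDivisors R) (FractionRing R))

/-! If `I = (a, b)` is invertible, writing `1 = a u + b v` with `u, v ∈ I⁻¹` gives `r + w = 1`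
in `R` with `a ∣ b r` and `b ∣ a w`; in the local ring `R_p` one of `r, w` is a unit, so `a ∣ b`
or `b ∣ a` there. Conversely, if `I = (T)` with `T` finite and `R_p` is a valuation ring, some
`k ∈ T` divides all of `T` in `R_p`; clearing denominators gives `s ∉ p` with `s / k ∈ I⁻¹`, so
`s = k · (s / k) ∈ I I⁻¹`. Hence the integral ideal `I I⁻¹` lies in no maximal ideal. -/

open scoped nonZeroDivisors

theorem IsLocalRing.dvd_or_dvd_of_add_eq_one {A : Type*} [CommRing A] [IsLocalRing A]
    {a b r w : A} (hrw : r + w = 1) (hr : a ∣ b * r) (hw : b ∣ a * w) : a ∣ b ∨ b ∣ a :=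
  (isUnit_or_isUnit_of_add_one hrw).imp (fun h => h.dvd_mul_right.mp hr)
    (fun h => h.dvd_mul_right.mp hw)

theorem Ideal.dvd_mul_of_mem_span {R : Type*} [CommRing R] {T : Set R} {k s x : R}
    (h : ∀ t ∈ T, k ∣ s * t) (hx : x ∈ Ideal.span T) : k ∣ s * x := by
  induction hx using Submodule.span_induction with
  | mem t ht => exact h t ht
  | zero => simp
  | add x y _ _ hx hy => rw [mul_add]; exact dvd_add hx hy
  | smul c x _ hx => rw [smul_eq_mul, mul_left_comm]; exact dvd_mul_of_dvd_right hx c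

namespace IsLocalization

variable {R S : Type*} [CommRing R] [CommRing S] [Algebra R S]

theorem exists_associated_algebraMap (M : Submonoid R) [IsLocalization M S] (x : S) :
    ∃ a : R, Associated x (algebraMap R S a) := by
  obtain ⟨⟨a, s⟩, hx⟩ := surj M x
  exact ⟨a, (map_units S s).unit, hx⟩

theorem dvd_total_of_algebraMap (M : Submonoid R) [IsLocalization M S]
    (h : ∀ a b : R, algebraMap R S a ∣ algebraMap R S b ∨ algebraMap R S b ∣ algebraMap R S a) :
    @Std.Total S (· ∣ ·) := by
  refine ⟨fun x y => ?_⟩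
  obtain ⟨a, hx⟩ := exists_associated_algebraMap M x
  obtain ⟨b, hy⟩ := exists_associated_algebraMap M y
  rw [hx.dvd_iff_dvd_left, hy.dvd_iff_dvd_right, hx.dvd_iff_dvd_right, hy.dvd_iff_dvd_left]
  exact h a b

theorem exists_mem_dvd_mul_of_algebraMap_dvd {M : Submonoid R} [IsLocalization M S] {k t : R}
    (h : algebraMap R S k ∣ algebraMap R S t) : ∃ s ∈ M, k ∣ s * t := by
  obtain ⟨c, hc⟩ := h
  obtain ⟨⟨r, u⟩, hu⟩ := surj M c
  have : algebraMap R S (t * u) = algebraMap R S (k * r) := by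
    rw [map_mul, hc, map_mul, ← hu, mul_assoc]
  obtain ⟨v, hv⟩ := exists_of_eq (M := M) this
  exact ⟨v * u, M.mul_mem v.2 u.2, v * r, by linear_combination hv⟩

theorem exists_mem_forall_dvd_mul {M : Submonoid R} [IsLocalization M S] {k : R} (T : Finset R)
    (h : ∀ t ∈ T, algebraMap R S k ∣ algebraMap R S t) : ∃ s ∈ M, ∀ t ∈ T, k ∣ s * t := by
  classical
  induction T using Finset.induction_on with
  | empty => exact ⟨1, M.one_mem, by simp⟩
  | insert t T _ ih =>
    rw [Finset.forall_mem_insert] at h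
    obtain ⟨s, hs, hT⟩ := ih h.2
    obtain ⟨s', hs', ht⟩ := exists_mem_dvd_mul_of_algebraMap_dvd (M := M) h.1
    refine ⟨s * s', M.mul_mem hs hs', (Finset.forall_mem_insert _ _ _).mpr ⟨?_, fun x hx => ?_⟩⟩
    · rw [mul_assoc]; exact dvd_mul_of_dvd_right ht s
    · rw [mul_right_comm]; exact dvd_mul_of_dvd_left (hT x hx) s'

end IsLocalization

namespace FractionalIdeal

variable {R K : Type*} [CommRing R] [Field K] [Algebra R K] [IsFractionRing R K]

theorem exists_add_eq_one_of_isUnit_coeIdeal_span_pair {a b : R}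
    (h : IsUnit ((Ideal.span {a, b} : Ideal R) : FractionalIdeal R⁰ K)) :
    ∃ r w : R, r + w = 1 ∧ a ∣ b * r ∧ b ∣ a * w := by
  set I : FractionalIdeal R⁰ K := ↑(Ideal.span {a, b}) with hIdef
  obtain ⟨J, hIJ⟩ := h.exists_right_inv
  have integral : ∀ x ∈ I, ∀ z ∈ J, ∃ c : R, algebraMap R K c = x * z := fun x hx z hz =>
    (mem_one_iff _).mp (hIJ ▸ mul_mem_mul hx hz)
  have hI : I = spanSingleton R⁰ (algebraMap R K a) + spanSingleton R⁰ (algebraMap R K b) := by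
    rw [hIdef, Ideal.span_insert, coeIdeal_sup, coeIdeal_span_singleton, coeIdeal_span_singleton]
  have h1 : (1 : K) ∈ I * J := hIJ ▸ one_mem_one _
  rw [hI, add_mul, mem_add] at h1
  obtain ⟨_, hau, _, hbv, huv⟩ := h1
  obtain ⟨u, hu, rfl⟩ := mem_singleton_mul.mp hau
  obtain ⟨v, hv, rfl⟩ := mem_singleton_mul.mp hbv
  have haI : algebraMap R K a ∈ I := mem_coeIdeal_of_mem _ (Ideal.subset_span (by simp))
  have hbI : algebraMap R K b ∈ I := mem_coeIdeal_of_mem _ (Ideal.subset_span (by simp))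
  obtain ⟨r, hr⟩ := integral _ haI u hu
  obtain ⟨s, hs⟩ := integral _ hbI u hu
  obtain ⟨t, ht⟩ := integral _ haI v hv
  obtain ⟨w, hw⟩ := integral _ hbI v hv
  have hinj := IsFractionRing.injective R K
  refine ⟨r, w, hinj ?_, ⟨s, hinj ?_⟩, ⟨t, hinj ?_⟩⟩
  · rw [map_add, hr, hw, map_one, huv]
  · rw [map_mul, map_mul, hr, hs]; ring
  · rw [map_mul, map_mul, hw, ht]; ring

theorem div_mem_one_div_coeIdeal [IsDomain R] {I : Ideal R} (hI : I ≠ ⊥) {k s : R} (hk : k ≠ 0)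
    (h : ∀ x ∈ I, k ∣ s * x) :
    algebraMap R K s / algebraMap R K k ∈ 1 / (I : FractionalIdeal R⁰ K) := by
  rw [mem_div_iff_of_ne_zero (coeIdeal_ne_zero.mpr hI)]
  rintro _ ⟨x, hx, rfl⟩
  obtain ⟨c, hc⟩ := h x hx
  refine (mem_one_iff _).mpr ⟨c, ?_⟩
  have hk' : algebraMap R K k ≠ 0 := (map_ne_zero_iff _ (IsFractionRing.injective R K)).mpr hk
  rw [Algebra.linearMap_apply, div_mul_eq_mul_div, ← map_mul, hc, map_mul,
    mul_div_cancel_left₀ _ hk']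

theorem eq_one_of_le_one_of_forall_isMaximal {J : FractionalIdeal R⁰ K} (hJ : J ≤ 1)
    (h : ∀ m : Ideal R, m.IsMaximal → ∃ s ∉ m, algebraMap R K s ∈ J) : J = 1 := by
  obtain ⟨J₀, rfl⟩ := le_one_iff_exists_coeIdeal.mp hJ
  rw [← coeIdeal_top, coeIdeal_inj]
  by_contra hne
  obtain ⟨m, hm, hle⟩ := Ideal.exists_le_maximal J₀ hne
  obtain ⟨s, hs, hsJ⟩ := h m hm
  obtain ⟨s', hs', hss'⟩ := (mem_coeIdeal _).mp hsJ
  exact hs (hle (IsFractionRing.injective R K hss' ▸ hs'))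

theorem exists_notMem_algebraMap_mem_coeIdeal_mul_one_div [IsDomain R] (p : Ideal R) [p.IsPrime]
    [ValuationRing (Localization.AtPrime p)] {I : Ideal R} (hfg : I.FG) (hI : I ≠ ⊥) :
    ∃ s ∉ p, algebraMap R K s ∈ (I : FractionalIdeal R⁰ K) * (1 / I) := by
  classical
  obtain ⟨T, rfl⟩ := hfg
  have hT : T.Nonempty := Finset.nonempty_iff_ne_empty.mpr (by rintro rfl; simp at hI)
  obtain ⟨k, hkT, hk⟩ :=
    T.exists_max_image (fun t => Ideal.span {algebraMap R (Localization.AtPrime p) t}) hT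
  obtain ⟨s, hs, hdvd⟩ := IsLocalization.exists_mem_forall_dvd_mul (M := p.primeCompl)
    (S := Localization.AtPrime p) T fun t ht => Ideal.span_singleton_le_span_singleton.mp (hk t ht)
  have hs0 : s ≠ 0 := fun h => hs (h ▸ p.zero_mem)
  have hk0 : k ≠ 0 := by
    rintro rfl
    refine hI (Ideal.span_eq_bot.mpr fun t ht => ?_)
    exact (mul_eq_zero.mp (zero_dvd_iff.mp (hdvd t ht))).resolve_left hs0
  refine ⟨s, hs, ?_⟩
  have hkI : algebraMap R K k ∈ (Ideal.span (T : Set R) : FractionalIdeal R⁰ K) :=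
    mem_coeIdeal_of_mem _ (Ideal.subset_span hkT)
  have hk' : algebraMap R K k ≠ 0 := (map_ne_zero_iff _ (IsFractionRing.injective R K)).mpr hk0
  simpa only [mul_div_cancel₀ _ hk'] using
    mul_mem_mul hkI (div_mem_one_div_coeIdeal hI hk0 fun x hx => Ideal.dvd_mul_of_mem_span hdvd hx)

end FractionalIdeal

theorem IsPruferDomain.algebraMap_dvd_or_dvd {R : Type*} [CommRing R] [IsDomain R]
    (h : IsPruferDomain R) (p : Ideal R) [p.IsPrime] (a b : R) :
    algebraMap R (Localization.AtPrime p) a ∣ algebraMap R (Localization.AtPrime p) b ∨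
      algebraMap R (Localization.AtPrime p) b ∣ algebraMap R (Localization.AtPrime p) a := by
  rcases eq_or_ne a 0 with rfl | ha
  · simp
  have hI : Ideal.span {a, b} ≠ ⊥ := fun hI => ha (Ideal.span_eq_bot.mp hI a (by simp))
  obtain ⟨r, w, hrw, hr, hw⟩ :=
    FractionalIdeal.exists_add_eq_one_of_isUnit_coeIdeal_span_pair
      (h _ (Submodule.fg_span (Set.toFinite _)) hI)
  set f := algebraMap R (Localization.AtPrime p)
  refine IsLocalRing.dvd_or_dvd_of_add_eq_one (r := f r) (w := f w) ?_ ?_ ?_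
  · rw [← map_add, hrw, map_one]
  · simpa only [map_mul] using map_dvd f hr
  · simpa only [map_mul] using map_dvd f hw

/-- An integral domain is Prüfer iff every localization at a prime is a
valuation domain. -/
theorem isPruferDomain_iff_localization_valuationRing (R : Type*) [CommRing R]
    [IsDomain R] :
    IsPruferDomain R ↔
      ∀ (p : Ideal R) (hp : p.IsPrime), ValuationRing (Localization.AtPrime p) := by
  constructor
  · intro h p _
    exact ValuationRing.iff_dvd_total.mpr <|
      IsLocalization.dvd_total_of_algebraMap p.primeCompl (h.algebraMap_dvd_or_dvd p)
  · intro h I hfg hI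
    refine IsUnit.of_mul_eq_one (1 / (I : FractionalIdeal R⁰ (FractionRing R))) <|
      FractionalIdeal.eq_one_of_le_one_of_forall_isMaximal FractionalIdeal.mul_one_div_le_one
        fun m hm => ?_
    have := h m hm.isPrime
    exact FractionalIdeal.exists_notMem_algebraMap_mem_coeIdeal_mul_one_div m hfg hI
end

section
/- Over a Prüfer domain, every torsion-free module is flat. -/
namespace IsPruferDomain

variable {R : Type*} [CommRing R] [IsDomain R]

theorem isPrincipal_map_of_isLocalRing (hR : IsPruferDomain R) {S : Type*} [CommRing S]
    [IsDomain S] [IsLocalRing S] [Algebra R S] [Module.IsTorsionFree R S]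
    {I : Ideal R} (hI : I.FG) : (I.map (algebraMap R S)).IsPrincipal := by
  obtain rfl | hI₀ := eq_or_ne I ⊥
  · rw [Ideal.map_bot]
    exact bot_isPrincipal
  refine Ideal.IsPrincipal.of_finite_maximals_of_isUnit ?_ ?_
  · obtain ⟨m, -, hm⟩ := IsLocalRing.maximal_ideal_unique S
    exact Set.Subsingleton.finite fun I hI J hJ => (hm I hI).trans (hm J hJ).symm
  · rw [← FractionalIdeal.extendedHom_coeIdeal_eq_map (K := FractionRing R) (FractionRing S) S]
    exact (hR I hI hI₀).map _

theorem valuationRing_of_isLocalization (hR : IsPruferDomain R) (M : Submonoid R) (S : Type*)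
    [CommRing S] [IsDomain S] [IsLocalRing S] [Algebra R S] [Module.IsTorsionFree R S]
    [IsLocalization M S] : ValuationRing S := by
  have : IsBezout S := by
    rw [IsBezout.iff_span_pair_isPrincipal]
    intro x y
    obtain ⟨a, b, d, hx, hy⟩ := IsLocalization.surj₂ M S x y
    have hd : IsUnit (algebraMap R S d) := IsLocalization.map_units S d
    have hspan : Ideal.span {x, y} = (Ideal.span {a, b}).map (algebraMap R S) := by
      rw [Ideal.map_span, Set.image_pair, ← hx, ← hy, Ideal.span_insert, Ideal.span_insert,
        Ideal.span_singleton_mul_right_unit hd, Ideal.span_singleton_mul_right_unit hd]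
    rw [hspan]
    exact hR.isPrincipal_map_of_isLocalRing (Submodule.fg_span (Set.toFinite _))
  infer_instance

end IsPruferDomain

/-- Over a Prüfer domain, every torsion-free module is flat. -/
theorem isPruferDomain_torsionFree_flat (R : Type*) [CommRing R] [IsDomain R]
    (h : IsPruferDomain R) (M : Type*) [AddCommGroup M] [Module R M]
    (htf : ∀ (r : R) (m : M), r • m = 0 → r ≠ 0 → m = 0) :
    Module.Flat R M := by
  have htorsion : Submodule.torsion R M = ⊥ := by
    rw [eq_bot_iff]
    rintro m ⟨⟨r, hr⟩, hrm⟩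
    exact htf r m hrm (nonZeroDivisors.ne_zero hr)
  exact (Module.Flat.flat_iff_torsion_eq_bot_of_valuationRing_localization_isMaximal
    fun P _ => h.valuationRing_of_isLocalization P.primeCompl _).mpr htorsion
end

section
/- Every finitely generated ideal of the ring of algebraic integers (the integral closure of ℤ in an algebraic closure of ℚ) is principal; in particular, the ring of algebraic integers is a Bézout domain. -/
/-!
Given algebraic integers `x, y`, let `K = ℚ(x, y)` and let `h` be the class number of `K`.
In `𝓞 K` the ideal `(x, y) ^ h` is principal, say `(a)`. Adjoining an `h`-th root `b` of `a`
gives a number field `L ⊇ K` in which `((x, y) 𝓞 L) ^ h = (b) ^ h`; since ideals of the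
Dedekind domain `𝓞 L` factor uniquely, `(x, y) 𝓞 L = (b)`, and hence `(x, y) = (b)` among all
algebraic integers.
-/

open NumberField IntermediateField

theorem Ideal.isPrincipal_pow_card_classGroup {R : Type*} [CommRing R] [IsDedekindDomain R]
    [Fintype (ClassGroup R)] (I : Ideal R) : (I ^ Fintype.card (ClassGroup R)).IsPrincipal := by
  by_cases hI0 : I = 0
  · simp [hI0, bot_isPrincipal]
  have hI := mem_nonZeroDivisors_of_ne_zero hI0
  rw [← ClassGroup.mk0_eq_one_iff (pow_mem hI _), ← SubmonoidClass.mk_pow _ hI, map_pow,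
    pow_card_eq_one]

theorem Ideal.eq_span_singleton_of_pow_eq {R : Type*} [CommRing R] [IsDedekindDomain R]
    {I : Ideal R} {n : ℕ} (hn : n ≠ 0) {c : R} (h : I ^ n = Ideal.span {c ^ n}) :
    I = Ideal.span {c} :=
  pow_left_injective hn (show I ^ n = Ideal.span {c} ^ n by rw [h, Ideal.span_singleton_pow])

theorem Ideal.map_eq_span_singleton_of_pow_eq {R S : Type*} [CommRing R] [CommRing S]
    [IsDedekindDomain S] (f : R →+* S) {I : Ideal R} {n : ℕ} (hn : n ≠ 0) {a : R}
    (hI : I ^ n = Ideal.span {a}) {c : S} (hc : f a = c ^ n) : I.map f = Ideal.span {c} :=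
  eq_span_singleton_of_pow_eq hn <| by
    rw [← Ideal.map_pow, hI, Ideal.map_span, Set.image_singleton, hc]

theorem integralClosure.exists_pow_eq {R F : Type*} [CommRing R] [Field F] [IsAlgClosed F]
    [Algebra R F] (a : integralClosure R F) {n : ℕ} (hn : n ≠ 0) : ∃ b, b ^ n = a := by
  obtain ⟨b, hb⟩ := IsAlgClosed.exists_pow_nat_eq (a : F) (Nat.pos_of_ne_zero hn)
  exact ⟨⟨b, .of_pow (Nat.pos_of_ne_zero hn) (hb ▸ a.2)⟩, Subtype.ext hb⟩

namespace IntermediateField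

variable {F : Type*} [Field F] [CharZero F]

theorem numberField_adjoin {s : Set F} [Finite s] (hs : ∀ x ∈ s, IsIntegral ℤ x) :
    NumberField (adjoin ℚ s) :=
  have := finiteDimensional_adjoin (K := ℚ) fun x hx => (hs x hx).tower_top
  ⟨⟩

noncomputable def ringOfIntegersToIntegralClosure (L : IntermediateField ℚ F) :
    𝓞 L →+* integralClosure ℤ F :=
  (L.val.restrictScalars ℤ).mapIntegralClosure.toRingHom

theorem ringOfIntegersToIntegralClosure_injective (L : IntermediateField ℚ F) :
    Function.Injective L.ringOfIntegersToIntegralClosure := fun _ _ h =>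
  RingOfIntegers.ext <| Subtype.ext <| congrArg (fun w : integralClosure ℤ F => (w : F)) h

theorem exists_ringOfIntegersToIntegralClosure_eq (L : IntermediateField ℚ F)
    {x : integralClosure ℤ F} (hx : (x : F) ∈ L) :
    ∃ y : 𝓞 L, L.ringOfIntegersToIntegralClosure y = x :=
  ⟨⟨⟨x, hx⟩, (isIntegral_algebraMap_iff L.val.injective).mp x.2⟩, rfl⟩

theorem ringOfIntegersToIntegralClosure_comp_mapRingHom_inclusion
    {K L : IntermediateField ℚ F} (h : K ≤ L) :
    L.ringOfIntegersToIntegralClosure.comp (RingOfIntegers.mapRingHom (inclusion h)) =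
      K.ringOfIntegersToIntegralClosure :=
  rfl

end IntermediateField

theorem span_pair_isPrincipal_integralClosure_int {F : Type*} [Field F] [CharZero F]
    [IsAlgClosed F] (x y : integralClosure ℤ F) : (Ideal.span {x, y}).IsPrincipal := by
  let K := adjoin ℚ {(x : F), (y : F)}
  have : NumberField K := numberField_adjoin (by rintro _ (rfl | rfl); exacts [x.2, y.2])
  obtain ⟨x', hx'⟩ :=
    K.exists_ringOfIntegersToIntegralClosure_eq (x := x) (subset_adjoin _ _ (by simp))
  obtain ⟨y', hy'⟩ :=
    K.exists_ringOfIntegersToIntegralClosure_eq (x := y) (subset_adjoin _ _ (by simp))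
  have hh : Fintype.card (ClassGroup (𝓞 K)) ≠ 0 := Fintype.card_ne_zero
  obtain ⟨a, ha⟩ := (Ideal.span {x', y'}).isPrincipal_pow_card_classGroup
  obtain ⟨b, hb⟩ := integralClosure.exists_pow_eq (K.ringOfIntegersToIntegralClosure a) hh
  let L := adjoin ℚ {(x : F), (y : F), (b : F)}
  have : NumberField L :=
    numberField_adjoin (by rintro _ (rfl | rfl | rfl); exacts [x.2, y.2, b.2])
  have hKL : K ≤ L := adjoin.mono _ _ _ (by simp [Set.insert_subset_iff])
  obtain ⟨b', hb'⟩ :=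
    L.exists_ringOfIntegersToIntegralClosure_eq (x := b) (subset_adjoin _ _ (by simp))
  have hcomp := ringOfIntegersToIntegralClosure_comp_mapRingHom_inclusion hKL
  have hL : (Ideal.span {x', y'}).map (RingOfIntegers.mapRingHom (inclusion hKL)) =
      Ideal.span {b'} :=
    Ideal.map_eq_span_singleton_of_pow_eq _ hh ha <|
      L.ringOfIntegersToIntegralClosure_injective <| by
        rw [map_pow, hb', ← RingHom.comp_apply, hcomp, hb]
  refine ⟨b, ?_⟩
  have := congrArg (Ideal.map L.ringOfIntegersToIntegralClosure) hL
  rwa [Ideal.map_map, hcomp, Ideal.map_span, Ideal.map_span, Set.image_insert_eq,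
    Set.image_singleton, Set.image_singleton, hx', hy', hb'] at this

theorem isBezout_integralClosure_int {F : Type*} [Field F] [CharZero F] [IsAlgClosed F] :
    IsBezout (integralClosure ℤ F) :=
  IsBezout.iff_span_pair_isPrincipal.mpr span_pair_isPrincipal_integralClosure_int

/-- Every finitely generated ideal of the ring of algebraic integers (the
integral closure of ℤ in an algebraic closure of ℚ) is principal; in
particular, the ring of algebraic integers is a Bézout domain. -/
theorem algebraicIntegers_fg_ideal_principal :
    (∀ I : Ideal (integralClosure ℤ (AlgebraicClosure ℚ)),
        I.FG → Submodule.IsPrincipal I) ∧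
      IsBezout (integralClosure ℤ (AlgebraicClosure ℚ)) :=
  have : IsBezout (integralClosure ℤ (AlgebraicClosure ℚ)) := isBezout_integralClosure_int
  ⟨fun I hI => IsBezout.isPrincipal_of_FG I hI, this⟩
end

section
/- Let R be a commutative ring in which every finitely generated torsion-free module is projective (e.g., a Prüfer domain). Then Nil₀(R) = 0: for every finitely generated projective R-module P and nilpotent endomorphism ν of P, the class [(P, ν)] equals [(P, 0)] in K₀ of the category of pairs (projective module, nilpotent endomorphism). -/
universe u

/-- An object of the exact category `Nil(R)`: a finitely generated projective
`R`-module together with a nilpotent endomorphism. -/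
structure NilObj (R : Type u) [CommRing R] : Type (u + 1) where
  carrier : Type u
  [acg : AddCommGroup carrier]
  [mod : Module R carrier]
  projective : Module.Projective R carrier
  finite : Module.Finite R carrier
  nil : carrier →ₗ[R] carrier
  isNil : IsNilpotent nil

attribute [instance] NilObj.acg NilObj.mod

variable (R : Type u) [CommRing R]

/-- The elements of the free abelian group on objects of `Nil(R)` coming from
short exact sequences (with maps commuting with the nilpotent endomorphisms):
`[B] - [A] - [C]` for each short exact sequence `0 → A → B → C → 0`. -/
def NilRelSet : Set (FreeAbelianGroup (NilObj R)) :=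
  { x | ∃ (A B C : NilObj R) (f : A.carrier →ₗ[R] B.carrier)
      (g : B.carrier →ₗ[R] C.carrier),
      Function.Injective f ∧ Function.Surjective g ∧
      LinearMap.range f = LinearMap.ker g ∧
      g ∘ₗ B.nil = C.nil ∘ₗ g ∧ f ∘ₗ A.nil = B.nil ∘ₗ f ∧
      x = FreeAbelianGroup.of B - FreeAbelianGroup.of A - FreeAbelianGroup.of C }

/-- The Grothendieck group `K₀(Nil(R))` of the exact category `Nil(R)`. -/
def K0Nil : Type (u + 1) :=
  FreeAbelianGroup (NilObj R) ⧸ AddSubgroup.closure (NilRelSet R)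

instance : AddCommGroup (K0Nil R) :=
  QuotientAddGroup.Quotient.addCommGroup _

/-- The class of an object of `Nil(R)` in `K₀(Nil(R))`. -/
def K0Nil.mk (N : NilObj R) : K0Nil R :=
  QuotientAddGroup.mk (FreeAbelianGroup.of N)

/-!
Induct on the nilpotency index of `ν`. The image `ν(P)` is a finitely generated submodule of the
projective, hence flat, hence torsion-free module `P`, so by hypothesis it is projective. Hence
`0 → ker ν → P → ν(P) → 0` splits and `ker ν` is again finitely generated projective. This
sequence is short exact in `Nil(R)` both as `(ker ν, 0) → (P, ν) → (ν(P), ν)` and with all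
endomorphisms replaced by `0`, and `ν` has smaller nilpotency index on `ν(P)`, so
`[(P, ν)] = [(ker ν, 0)] + [(ν(P), ν)] = [(ker ν, 0)] + [(ν(P), 0)] = [(P, 0)]`.
-/

attribute [instance] NilObj.projective NilObj.finite

variable {R}

section SplitExact

variable {M N P : Type*} [AddCommGroup M] [AddCommGroup N] [AddCommGroup P]
  [Module R M] [Module R N] [Module R P] {f : M →ₗ[R] N} {g : N →ₗ[R] P}

theorem Function.Exact.exists_retraction_of_projective [Module.Projective R P]
    (h : Function.Exact f g) (hf : Function.Injective f) (hg : Function.Surjective g) :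
    ∃ l : N →ₗ[R] M, l ∘ₗ f = LinearMap.id :=
  ((h.split_tfae hf hg).out 0 1).1 <|
    g.exists_rightInverse_of_surjective (LinearMap.range_eq_top.2 hg)

theorem Module.Projective.of_exact [Module.Projective R N] [Module.Projective R P]
    (h : Function.Exact f g) (hf : Function.Injective f) (hg : Function.Surjective g) :
    Module.Projective R M := by
  obtain ⟨l, hl⟩ := h.exists_retraction_of_projective hf hg
  exact .of_split f l hl

theorem Module.Finite.of_exact_of_projective [Module.Finite R N] [Module.Projective R P]
    (h : Function.Exact f g) (hf : Function.Injective f) (hg : Function.Surjective g) :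
    Module.Finite R M := by
  obtain ⟨l, hl⟩ := h.exists_retraction_of_projective hf hg
  exact .of_surjective l fun x ↦ ⟨f x, LinearMap.congr_fun hl x⟩

end SplitExact

theorem LinearMap.exact_subtype_ker_rangeRestrict {M N : Type*} [AddCommGroup M] [AddCommGroup N]
    [Module R M] [Module R N] (f : M →ₗ[R] N) :
    Function.Exact (LinearMap.ker f).subtype f.rangeRestrict := by
  rw [LinearMap.exact_iff, LinearMap.ker_rangeRestrict, Submodule.range_subtype]

variable (R) in
def FGTorsionFreeIsProjective : Prop :=
  ∀ (M : Type u) [AddCommGroup M] [Module R M],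
    Module.Finite R M → Module.IsTorsionFree R M → Module.Projective R M

namespace FGTorsionFreeIsProjective

variable {M P : Type u} [AddCommGroup M] [AddCommGroup P] [Module R M] [Module R P]
  [Module.Finite R M] [Module.Projective R P]

theorem projective_range (hR : FGTorsionFreeIsProjective R) (f : M →ₗ[R] P) :
    Module.Projective R (LinearMap.range f) :=
  hR _ inferInstance inferInstance

theorem projective_ker [Module.Projective R M] (hR : FGTorsionFreeIsProjective R)
    (f : M →ₗ[R] P) : Module.Projective R (LinearMap.ker f) :=
  have := hR.projective_range f
  .of_exact f.exact_subtype_ker_rangeRestrict (Submodule.injective_subtype _)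
    f.surjective_rangeRestrict

theorem finite_ker (hR : FGTorsionFreeIsProjective R) (f : M →ₗ[R] P) :
    Module.Finite R (LinearMap.ker f) :=
  have := hR.projective_range f
  .of_exact_of_projective f.exact_subtype_ker_rangeRestrict (Submodule.injective_subtype _)
    f.surjective_rangeRestrict

end FGTorsionFreeIsProjective

namespace NilObj

def ofModule (M : Type u) [AddCommGroup M] [Module R M] [Module.Projective R M]
    [Module.Finite R M] : NilObj R where
  carrier := M
  projective := ‹_›
  finite := ‹_›
  nil := 0
  isNil := IsNilpotent.zero

theorem eq_ofModule_of_nil_eq_zero (N : NilObj R) (h : N.nil = 0) : N = ofModule N.carrier := by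
  cases N
  dsimp only at h
  simp only [ofModule]
  congr

def restrictRange (N : NilObj R) [Module.Projective R (LinearMap.range N.nil)] : NilObj R where
  carrier := LinearMap.range N.nil
  projective := ‹_›
  finite := inferInstance
  nil := N.nil.restrict fun x _ ↦ N.nil.mem_range_self x
  isNil := Module.End.isNilpotent.restrict _ N.isNil

theorem restrictRange_nil_pow_eq_zero (N : NilObj R) [Module.Projective R (LinearMap.range N.nil)]
    {k : ℕ} (hk : N.nil ^ (k + 1) = 0) : N.restrictRange.nil ^ k = 0 := by
  change (N.nil.restrict (fun x _ ↦ N.nil.mem_range_self x) :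
    Module.End R (LinearMap.range N.nil)) ^ k = 0
  rw [Module.End.pow_restrict]
  ext ⟨_, x, rfl⟩
  rw [LinearMap.restrict_apply]
  simp only [LinearMap.zero_apply, ZeroMemClass.coe_zero, ← Module.End.mul_apply, ← pow_succ, hk]

end NilObj

namespace K0Nil

theorem mk_eq_add_of_exact {A B C : NilObj R} (f : A.carrier →ₗ[R] B.carrier)
    (g : B.carrier →ₗ[R] C.carrier) (hf : Function.Injective f) (hg : Function.Surjective g)
    (hfg : Function.Exact f g) (hfν : f ∘ₗ A.nil = B.nil ∘ₗ f) (hgν : g ∘ₗ B.nil = C.nil ∘ₗ g) :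
    K0Nil.mk R B = K0Nil.mk R A + K0Nil.mk R C := by
  have hrel : FreeAbelianGroup.of B - FreeAbelianGroup.of A - FreeAbelianGroup.of C ∈
      AddSubgroup.closure (NilRelSet R) :=
    AddSubgroup.subset_closure
      ⟨A, B, C, f, g, hf, hg, (LinearMap.exact_iff.1 hfg).symm, hgν, hfν, rfl⟩
  rw [← sub_eq_zero, ← sub_sub]
  exact (QuotientAddGroup.eq_zero_iff _).2 hrel

theorem mk_ofModule_eq_add_of_exact {M N P : Type u} [AddCommGroup M] [AddCommGroup N]
    [AddCommGroup P] [Module R M] [Module R N] [Module R P] [Module.Projective R M]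
    [Module.Finite R M] [Module.Projective R N] [Module.Finite R N] [Module.Projective R P]
    [Module.Finite R P] (f : M →ₗ[R] N) (g : N →ₗ[R] P) (hf : Function.Injective f)
    (hg : Function.Surjective g) (hfg : Function.Exact f g) :
    K0Nil.mk R (.ofModule N) = K0Nil.mk R (.ofModule M) + K0Nil.mk R (.ofModule P) :=
  mk_eq_add_of_exact (A := .ofModule M) (B := .ofModule N) (C := .ofModule P) f g hf hg hfg
    (f.comp_zero.trans f.zero_comp.symm) (g.comp_zero.trans g.zero_comp.symm)

section

variable (N : NilObj R) [Module.Projective R (LinearMap.ker N.nil)]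
  [Module.Finite R (LinearMap.ker N.nil)] [Module.Projective R (LinearMap.range N.nil)]

theorem mk_eq_mk_ker_add_mk_restrictRange :
    K0Nil.mk R N = K0Nil.mk R (.ofModule (LinearMap.ker N.nil)) + K0Nil.mk R N.restrictRange :=
  mk_eq_add_of_exact (A := .ofModule _) (C := N.restrictRange) _ _
    (Submodule.injective_subtype _) N.nil.surjective_rangeRestrict
    N.nil.exact_subtype_ker_rangeRestrict (LinearMap.ext fun x ↦ x.2.symm) rfl

theorem mk_ofModule_eq_mk_ker_add_mk_range :
    K0Nil.mk R (.ofModule N.carrier) = K0Nil.mk R (.ofModule (LinearMap.ker N.nil)) +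
      K0Nil.mk R (.ofModule (LinearMap.range N.nil)) :=
  mk_ofModule_eq_add_of_exact _ _ (Submodule.injective_subtype _) N.nil.surjective_rangeRestrict
    N.nil.exact_subtype_ker_rangeRestrict

end

theorem mk_eq_mk_ofModule_of_pow_eq_zero (hR : FGTorsionFreeIsProjective R) (k : ℕ)
    (N : NilObj R) (hk : N.nil ^ k = 0) : K0Nil.mk R N = K0Nil.mk R (.ofModule N.carrier) := by
  induction k generalizing N with
  | zero =>
    rw [pow_zero] at hk
    exact congrArg _ (N.eq_ofModule_of_nil_eq_zero (eq_zero_of_zero_eq_one hk.symm _))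
  | succ k ih =>
    have := hR.projective_range N.nil
    have := hR.projective_ker N.nil
    have := hR.finite_ker N.nil
    rw [mk_eq_mk_ker_add_mk_restrictRange N, ih _ (N.restrictRange_nil_pow_eq_zero hk),
      mk_ofModule_eq_mk_ker_add_mk_range N]
    rfl

end K0Nil

/-- If every finitely generated torsion-free module over the domain `R` is
projective (e.g. `R` a Prüfer domain), then `Nil₀(R) = 0`: for every finitely
generated projective `R`-module `P` with nilpotent endomorphism `ν`, the class
of `(P, ν)` in `K₀(Nil(R))` equals the class of `(P, 0)`. -/
theorem nil0_trivial (R : Type u) [CommRing R] [IsDomain R]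
    (hTF : ∀ (M : Type u) [AddCommGroup M] [Module R M], Module.Finite R M →
      (∀ (r : R) (m : M), r • m = 0 → r ≠ 0 → m = 0) → Module.Projective R M)
    (N : NilObj R) :
    K0Nil.mk R N =
      K0Nil.mk R
        { carrier := N.carrier, acg := N.acg, mod := N.mod,
          projective := N.projective, finite := N.finite,
          nil := 0, isNil := ⟨1, by simp⟩ } := by
  have hR : FGTorsionFreeIsProjective R := fun M _ _ hfin _ ↦
    hTF M hfin fun _ _ hrm hr ↦ (smul_eq_zero_iff_right hr).1 hrm
  obtain ⟨k, hk⟩ := N.isNil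
  exact K0Nil.mk_eq_mk_ofModule_of_pow_eq_zero hR k N hk
end
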